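/- arXiv:1612.03722 — 2 statements merged into one kernel-verified Lean document; each statement's English description precedes it below -/
import Mathlib

section
/- In ℝ^d with d ≥ 2: given x1, x2 ∈ ℝ^d with |x1 - x2| ≥ ε0 > 0, R > 0, t > 0, and 0 < ε < ε0, the set K of relative velocities w ∈ B_{2R} such that |x1 - x2 - u w| ≤ ε for some u ∈ [0, t] has Lebesgue measure at most C R^d ( (ε/ε0)^{d-1} + (R t)^d ε^{d-1} / ε0^d ) for a constant C depending only on d. -/
/-!
Write `x = x1 - x2`. If `‖x - u • w‖ ≤ ε` with `u ≥ 0`, then `u‖w‖ ≥ ‖x‖ - ε ≥ ε0 - ε`, while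
every component of `w` orthogonal to `x` is at most `ε / u` in size. For `2ε ≤ ε0` this bounds
those `d - 1` components by `4Rε/ε0` when `‖w‖ ≤ 2R`; for larger `ε` the bound `‖w‖ ≤ 2R` already
gives that. Hence `K` lies in a box of volume `4R (8Rε/ε0)^(d-1) ≤ 8^d R^d (ε/ε0)^(d-1)`.
-/

open MeasureTheory

open scoped RealInnerProductSpace

section

variable {E : Type*} [NormedAddCommGroup E] [InnerProductSpace ℝ E]

theorem abs_mul_abs_inner_le_of_inner_eq_zero {e x w : E} {u ε : ℝ} (he : ‖e‖ ≤ 1)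
    (hex : ⟪e, x⟫ = 0) (h : ‖x - u • w‖ ≤ ε) : |u| * |⟪e, w⟫| ≤ ε :=
  calc |u| * |⟪e, w⟫| = |⟪e, x - u • w⟫| := by
        rw [inner_sub_right, hex, real_inner_smul_right, zero_sub, abs_neg, abs_mul]
    _ ≤ ‖e‖ * ‖x - u • w‖ := abs_real_inner_le_norm _ _
    _ ≤ ε := by nlinarith [norm_nonneg e, norm_nonneg (x - u • w)]

theorem abs_inner_le_of_norm_sub_smul_le {e x w : E} {u ε ε0 ρ : ℝ} (he : ‖e‖ ≤ 1)
    (hex : ⟪e, x⟫ = 0) (hε0 : 0 < ε0) (hx : ε0 ≤ ‖x‖) (hw : ‖w‖ ≤ ρ) (hu : 0 ≤ u)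
    (h : ‖x - u • w‖ ≤ ε) : |⟪e, w⟫| ≤ 2 * ρ * ε / ε0 := by
  have hε : 0 ≤ ε := (norm_nonneg _).trans h
  have hew : |⟪e, w⟫| ≤ ‖w‖ := (abs_real_inner_le_norm e w).trans
    (mul_le_of_le_one_left (norm_nonneg w) he)
  rw [le_div_iff₀ hε0]
  rcases le_or_gt ε0 (2 * ε) with hlarge | hsmall
  · nlinarith [abs_nonneg ⟪e, w⟫]
  · have huw : ε0 - ε ≤ u * ‖w‖ := by
      have := norm_sub_norm_le x (u • w)
      rw [norm_smul, Real.norm_of_nonneg hu] at this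
      linarith
    have hperp := abs_mul_abs_inner_le_of_inner_eq_zero he hex h
    rw [abs_of_nonneg hu] at hperp
    nlinarith [abs_nonneg ⟪e, w⟫, mul_le_mul_of_nonneg_left hw hu]

variable [FiniteDimensional ℝ E]

theorem exists_orthonormalBasis_inner_succ_eq_zero {n : ℕ} (hn : Module.finrank ℝ E = n + 1)
    {x : E} (hx : x ≠ 0) :
    ∃ B : OrthonormalBasis (Fin (n + 1)) ℝ E, ∀ j : Fin n, ⟪B j.succ, x⟫ = 0 := by
  have hunit : Orthonormal ℝ (({0} : Set (Fin (n + 1))).domRestrict fun _ => ‖x‖⁻¹ • x) := by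
    rw [orthonormal_iff_ite]
    rintro ⟨i, rfl⟩ ⟨j, rfl⟩
    simp [Set.domRestrict_apply, norm_smul, hx]
  obtain ⟨B, hB⟩ := hunit.exists_orthonormalBasis_extension_of_card_eq (by simpa using hn)
  refine ⟨B, fun j => ?_⟩
  have hx' : x = ‖x‖ • B 0 := by
    rw [hB 0 rfl, smul_inv_smul₀ (norm_ne_zero_iff.2 hx)]
  rw [hx', real_inner_smul_right, B.orthonormal.2 (Fin.succ_ne_zero j), mul_zero]

variable [MeasurableSpace E] [BorelSpace E]

theorem OrthonormalBasis.volume_setOf_abs_inner_le {ι : Type*} [Fintype ι]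
    (B : OrthonormalBasis ι ℝ E) (c : ι → ℝ) :
    volume {w : E | ∀ i, |⟪B i, w⟫| ≤ c i} = ∏ i, ENNReal.ofReal (2 * c i) := by
  have hbox : {w : E | ∀ i, |⟪B i, w⟫| ≤ c i} =
      (WithLp.ofLp ∘ B.repr) ⁻¹' Set.univ.pi fun i => Set.Icc (-c i) (c i) := by
    ext w
    simp only [Set.mem_ofPred_eq, Set.mem_preimage, Function.comp_apply, Set.mem_univ_pi,
      Set.mem_Icc, ← abs_le, B.repr_apply_apply]
  rw [hbox, ((PiLp.volume_preserving_ofLp ι).comp B.measurePreserving_repr).measure_preimage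
    (MeasurableSet.univ_pi fun i => measurableSet_Icc).nullMeasurableSet, volume_pi_pi]
  simp [Real.volume_Icc, two_mul]

theorem volume_collision_velocities_le {x : E} {ε0 ε ρ : ℝ} (hε0 : 0 < ε0) (hx : ε0 ≤ ‖x‖) :
    volume {w : E | ‖w‖ ≤ ρ ∧ ∃ u : ℝ, 0 ≤ u ∧ ‖x - u • w‖ ≤ ε} ≤
      ENNReal.ofReal (2 * ρ) * ENNReal.ofReal (4 * ρ * ε / ε0) ^ (Module.finrank ℝ E - 1) := by
  have hx0 : x ≠ 0 := norm_pos_iff.1 (hε0.trans_le hx)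
  obtain ⟨n, hn⟩ : ∃ n, Module.finrank ℝ E = n + 1 :=
    Nat.exists_eq_add_one.2 (Module.finrank_pos_iff_exists_ne_zero.2 ⟨x, hx0⟩)
  obtain ⟨B, hB⟩ := exists_orthonormalBasis_inner_succ_eq_zero hn hx0
  let c : Fin (n + 1) → ℝ := Fin.cons ρ fun _ => 2 * ρ * ε / ε0
  calc volume {w : E | ‖w‖ ≤ ρ ∧ ∃ u : ℝ, 0 ≤ u ∧ ‖x - u • w‖ ≤ ε}
      ≤ volume {w : E | ∀ i, |⟪B i, w⟫| ≤ c i} := by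
        refine measure_mono fun w ⟨hw, u, hu, hcol⟩ i => ?_
        cases i using Fin.cases with
        | zero => exact (abs_real_inner_le_norm _ _).trans (by simpa [c] using hw)
        | succ j =>
          exact abs_inner_le_of_norm_sub_smul_le (B.norm_eq_one _).le (hB j) hε0 hx hw hu hcol
    _ = ENNReal.ofReal (2 * ρ) * ENNReal.ofReal (4 * ρ * ε / ε0) ^ (Module.finrank ℝ E - 1) := by
        rw [B.volume_setOf_abs_inner_le, Fin.prod_univ_succ, hn]
        simp only [c, Fin.cons_zero, Fin.cons_succ, Finset.prod_const, Finset.card_univ,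
          Fintype.card_fin, Nat.add_sub_cancel]
        ring_nf

end

theorem relative_velocity_collision_set_measure_general (d : ℕ) :
    ∃ C > 0, ∀ (x1 x2 : EuclideanSpace ℝ (Fin d)) (ε0 R t ε : ℝ),
      0 < ε0 → ε0 ≤ ‖x1 - x2‖ → 0 < R → 0 < t → 0 < ε → ε < ε0 →
      volume {w : EuclideanSpace ℝ (Fin d) | ‖w‖ ≤ 2 * R ∧
          ∃ u ∈ Set.Icc (0 : ℝ) t, ‖x1 - x2 - u • w‖ ≤ ε} ≤
        ENNReal.ofReal (C * R ^ d *
          ((ε / ε0) ^ (d - 1) + (R * t) ^ d * ε ^ (d - 1) / ε0 ^ d)) := by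
  refine ⟨8 ^ d, by positivity, fun x1 x2 ε0 R t ε hε0 hx hR _ _ _ => ?_⟩
  obtain ⟨n, rfl⟩ : ∃ n, d = n + 1 := by
    refine Nat.exists_eq_add_one.2 (Nat.pos_of_ne_zero ?_)
    rintro rfl
    exact (hε0.trans_le hx).ne' (norm_eq_zero.2 (Subsingleton.elim _ _))
  have hbound : 4 * R * (8 * R * (ε / ε0)) ^ n ≤ 8 ^ (n + 1) * R ^ (n + 1) *
      ((ε / ε0) ^ (n + 1 - 1) + (R * t) ^ (n + 1) * ε ^ (n + 1 - 1) / ε0 ^ (n + 1)) := by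
    rw [Nat.add_sub_cancel, mul_pow, mul_pow, pow_succ, pow_succ]
    nlinarith [(by positivity : 0 ≤ 8 ^ n * (R ^ n * R) * (ε / ε0) ^ n),
      (by positivity : 0 ≤ 8 ^ n * 8 * (R ^ n * R) * ((R * t) ^ (n + 1) * ε ^ n / ε0 ^ (n + 1)))]
  calc _ ≤ volume {w : EuclideanSpace ℝ (Fin (n + 1)) | ‖w‖ ≤ 2 * R ∧
          ∃ u : ℝ, 0 ≤ u ∧ ‖x1 - x2 - u • w‖ ≤ ε} :=
        measure_mono <| by rintro w ⟨hw, u, hu, hcol⟩; exact ⟨hw, u, hu.1, hcol⟩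
    _ ≤ ENNReal.ofReal (2 * (2 * R)) * ENNReal.ofReal (4 * (2 * R) * ε / ε0) ^ n := by
        simpa only [finrank_euclideanSpace_fin, Nat.add_sub_cancel] using
          volume_collision_velocities_le (ρ := 2 * R) (ε := ε) hε0 hx
    _ = ENNReal.ofReal (4 * R * (8 * R * (ε / ε0)) ^ n) := by
        rw [← ENNReal.ofReal_pow (by positivity), ← ENNReal.ofReal_mul (by positivity)]
        ring_nf
    _ ≤ _ := ENNReal.ofReal_le_ofReal hbound

/-- Measure estimate for the set of relative velocities leading to a collision
within time `t` of two hard spheres of diameter `ε` starting at distance `≥ ε0`. -/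
theorem relative_velocity_collision_set_measure (d : ℕ) (hd : 2 ≤ d) :
    ∃ C > 0, ∀ (x1 x2 : EuclideanSpace ℝ (Fin d)) (ε0 R t ε : ℝ),
      0 < ε0 → ε0 ≤ ‖x1 - x2‖ → 0 < R → 0 < t → 0 < ε → ε < ε0 →
      volume {w : EuclideanSpace ℝ (Fin d) | ‖w‖ ≤ 2 * R ∧
          ∃ u ∈ Set.Icc (0 : ℝ) t, ‖x1 - x2 - u • w‖ ≤ ε} ≤
        ENNReal.ofReal (C * R ^ d *
          ((ε / ε0) ^ (d - 1) + (R * t) ^ d * ε ^ (d - 1) / ε0 ^ d)) :=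
  relative_velocity_collision_set_measure_general d
end

section
/- In ℝ^d with d ≥ 2: given x1, x2 ∈ ℝ^d, R > 0, δ > 0 and ε0 > 0, the set of relative velocities w ∈ B_{2R} such that |(x1 - x2) - u w| ≤ ε0 for some u ≥ δ has Lebesgue measure at most C R^d (ε0/(R δ))^{d-1} for a constant C depending only on d (here one can also use the bound C' ε0^{d-1} R / δ^{d-1}). -/
/-!
Take an orthonormal basis whose first vector is parallel to `x1 - x2`. Along that vector a
velocity in the set has coordinate at most `2R`; along each other basis vector `e`, the relation
`⟪e, x1 - x2 - u • w⟫ = -u ⟪e, w⟫` with `u ≥ δ` bounds the coordinate by `ε0 / δ`. The set thus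
lies in a box of volume `4R (2ε0/δ)^(d-1)`, and orthonormal coordinates preserve volume.
-/

open MeasureTheory

section InnerProductSpace

variable {E : Type*} [NormedAddCommGroup E] [InnerProductSpace ℝ E]

theorem exists_norm_eq_one_and_eq_smul [Nontrivial E] (y : E) :
    ∃ e : E, ‖e‖ = 1 ∧ ∃ c : ℝ, y = c • e := by
  rcases eq_or_ne y 0 with rfl | hy
  · obtain ⟨e, he⟩ := exists_norm_eq E zero_le_one
    exact ⟨e, he, 0, (zero_smul ℝ e).symm⟩
  · refine ⟨‖y‖⁻¹ • y, norm_smul_inv_norm hy, ‖y‖, ?_⟩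
    rw [smul_smul, mul_inv_cancel₀ (norm_ne_zero_iff.2 hy), one_smul]

theorem abs_inner_le_div_of_norm_sub_smul_le {e y w : E} (he : ‖e‖ = 1)
    (hey : inner ℝ e y = 0) {u δ ε : ℝ} (hδ : 0 < δ) (hu : δ ≤ u) (h : ‖y - u • w‖ ≤ ε) :
    |inner ℝ e w| ≤ ε / δ := by
  have hinner : |inner ℝ e (y - u • w)| = u * |inner ℝ e w| := by
    rw [inner_sub_right, hey, real_inner_smul_right, zero_sub, abs_neg, abs_mul,
      abs_of_pos (hδ.trans_le hu)]
  rw [le_div_iff₀ hδ]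
  calc |inner ℝ e w| * δ ≤ |inner ℝ e w| * u := mul_le_mul_of_nonneg_left hu (abs_nonneg _)
    _ = |inner ℝ e (y - u • w)| := by rw [hinner, mul_comm]
    _ ≤ ‖e‖ * ‖y - u • w‖ := abs_real_inner_le_norm _ _
    _ ≤ ε := by rwa [he, one_mul]

variable [FiniteDimensional ℝ E]

theorem exists_orthonormalBasis_inner_eq_zero_of_ne {ι : Type*} [Fintype ι]
    (card_ι : Module.finrank ℝ E = Fintype.card ι) (i₀ : ι) (y : E) :
    ∃ b : OrthonormalBasis ι ℝ E, ∀ i ≠ i₀, inner ℝ (b i) y = 0 := by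
  have : Nontrivial E := Module.nontrivial_of_finrank_pos (card_ι ▸ Fintype.card_pos_iff.2 ⟨i₀⟩)
  obtain ⟨e, he, c, rfl⟩ := exists_norm_eq_one_and_eq_smul y
  obtain ⟨b, hb⟩ := Orthonormal.exists_orthonormalBasis_extension_of_card_eq card_ι
    (v := fun _ => e) (s := {i₀}) (orthonormal_subsingleton_iff.2 fun _ => he)
  refine ⟨b, fun i hi => ?_⟩
  rw [← hb i₀ rfl, real_inner_smul_right, b.orthonormal.2 hi, mul_zero]

variable [MeasurableSpace E] [BorelSpace E]

theorem OrthonormalBasis.volume_setOf_forall_abs_inner_le {ι : Type*} [Fintype ι]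
    (b : OrthonormalBasis ι ℝ E) (r : ι → ℝ) :
    volume {w : E | ∀ i, |inner ℝ (b i) w| ≤ r i} = ∏ i, ENNReal.ofReal (2 * r i) := by
  have hset : {w : E | ∀ i, |inner ℝ (b i) w| ≤ r i} =
      (WithLp.ofLp ∘ b.repr) ⁻¹' Set.univ.pi fun i => Set.Icc (-r i) (r i) := by
    ext w
    simp only [Set.mem_ofPred_eq, Set.mem_preimage, Function.comp_apply, Set.mem_univ_pi,
      Set.mem_Icc, b.repr_apply_apply, abs_le]
  have hmp := (PiLp.volume_preserving_ofLp ι).comp b.measurePreserving_repr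
  have hbox : MeasurableSet (Set.univ.pi fun i => Set.Icc (-r i) (r i)) :=
    MeasurableSet.univ_pi fun _ => measurableSet_Icc
  rw [hset, hmp.measure_preimage hbox.nullMeasurableSet, volume_pi_pi]
  simp only [Real.volume_Icc, sub_neg_eq_add, two_mul]

theorem volume_late_closeness_le {n : ℕ} (hn : Module.finrank ℝ E = n + 1) (y : E)
    {R δ ε : ℝ} (hδ : 0 < δ) :
    volume {w : E | ‖w‖ ≤ R ∧ ∃ u : ℝ, δ ≤ u ∧ ‖y - u • w‖ ≤ ε} ≤
      ENNReal.ofReal (2 * R) * ENNReal.ofReal (2 * (ε / δ)) ^ n := by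
  obtain ⟨b, hb⟩ := exists_orthonormalBasis_inner_eq_zero_of_ne
    (hn.trans (Fintype.card_fin _).symm) 0 y
  let r : Fin (n + 1) → ℝ := Fin.cons R fun _ => ε / δ
  calc volume {w : E | ‖w‖ ≤ R ∧ ∃ u : ℝ, δ ≤ u ∧ ‖y - u • w‖ ≤ ε}
      ≤ volume {w : E | ∀ i, |inner ℝ (b i) w| ≤ r i} := by
        refine measure_mono fun w ⟨hw, u, hu, hwu⟩ i => ?_
        refine Fin.cases ?_ (fun j => ?_) i
        · calc |inner ℝ (b 0) w| ≤ ‖b 0‖ * ‖w‖ := abs_real_inner_le_norm _ _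
            _ ≤ R := by rwa [b.norm_eq_one, one_mul]
        · exact abs_inner_le_div_of_norm_sub_smul_le (b.norm_eq_one _)
            (hb _ (Fin.succ_ne_zero j)) hδ hu hwu
    _ = ENNReal.ofReal (2 * R) * ENNReal.ofReal (2 * (ε / δ)) ^ n := by
        rw [b.volume_setOf_forall_abs_inner_le, Fin.prod_univ_succ]
        simp [r]

end InnerProductSpace

/-- Measure estimate for the set of relative velocities keeping two particles
within distance `ε0` at some time `u ≥ δ`. -/
theorem relative_velocity_late_closeness_set_measure (d : ℕ) (hd : 2 ≤ d) :
    ∃ C > 0, ∀ (x1 x2 : EuclideanSpace ℝ (Fin d)) (R δ ε0 : ℝ),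
      0 < R → 0 < δ → 0 < ε0 →
      volume {w : EuclideanSpace ℝ (Fin d) | ‖w‖ ≤ 2 * R ∧
          ∃ u : ℝ, δ ≤ u ∧ ‖x1 - x2 - u • w‖ ≤ ε0} ≤
        ENNReal.ofReal (C * R ^ d * (ε0 / (R * δ)) ^ (d - 1)) := by
  obtain ⟨m, rfl⟩ : ∃ m, d = m + 1 := ⟨d - 1, by omega⟩
  refine ⟨2 ^ (m + 2), by positivity, fun x1 x2 R δ ε0 hR hδ hε0 => ?_⟩
  have hconst : 2 ^ (m + 2) * R ^ (m + 1) * (ε0 / (R * δ)) ^ (m + 1 - 1) =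
      2 * (2 * R) * (2 * (ε0 / δ)) ^ m := by
    rw [Nat.add_sub_cancel, mul_pow 2 (ε0 / δ), div_mul_eq_div_div_swap, div_pow]
    field_simp
    ring
  rw [hconst, ENNReal.ofReal_mul (by positivity), ENNReal.ofReal_pow (by positivity)]
  exact volume_late_closeness_le (by simp) (x1 - x2) hδ
end
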